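/- Let (R, m) be a Noetherian local ring, I an m-primary ideal, and J ⊆ I a reduction of I. Then the Hilbert–Samuel multiplicities coincide: e(J, R) = e(I, R). -/

import Mathlib

/-!
From `I ^ (n + 1) = J * I ^ n` one gets `I ^ (k + n) = J ^ k * I ^ n ⊆ J ^ k ⊆ I ^ k`, hence
`ℓ(R/Iᵏ) ≤ ℓ(R/Jᵏ) ≤ ℓ(R/Iᵏ⁺ⁿ)`. After scaling by `d!/kᵈ` both bounds tend to `e(I)`, since a
fixed shift `k ↦ k + n` does not change the leading coefficient.
-/

/-- The length of an `R`-module `M`, computed as the Krull dimension of its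
lattice of submodules (equal to the usual length for finite-length modules). -/
noncomputable def moduleLength (R M : Type*) [CommRing R] [AddCommGroup M] [Module R M] : ℕ :=
  ((Order.krullDim (Submodule R M)).unbotD 0).toNat

/-- `e` is the Hilbert–Samuel multiplicity of the ideal `I` in the `d`-dimensional
ring `R`: `e = lim_n d! · length(R/Iⁿ)/nᵈ`, i.e. `d!` times the leading coefficient
of the Hilbert–Samuel polynomial `n ↦ length(R/Iⁿ)`. -/
noncomputable def HasHSMultiplicity (R : Type*) [CommRing R] (I : Ideal R) (d : ℕ) (e : ℝ) : Prop :=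
  Filter.Tendsto
    (fun n : ℕ => ((Nat.factorial d : ℝ) * (moduleLength R (R ⧸ I ^ n) : ℝ)) / (n : ℝ) ^ d)
    Filter.atTop (nhds e)

open Filter Topology

lemma moduleLength_eq_toNat_length (R M : Type*) [CommRing R] [AddCommGroup M] [Module R M] :
    moduleLength R M = (Module.length R M).toNat := by
  rw [moduleLength, ← Module.coe_length, WithBot.unbotD_coe]

lemma Module.length_quotient_le_of_le {R : Type*} [CommRing R] {A B : Ideal R} (h : A ≤ B) :
    Module.length R (R ⧸ B) ≤ Module.length R (R ⧸ A) :=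
  Module.length_le_of_surjective _ (Submodule.factor_surjective h)

lemma Ideal.pow_add_le_pow_of_reduction {R : Type*} [CommRing R] {I J : Ideal R} {n : ℕ}
    (hred : I ^ (n + 1) = J * I ^ n) (k : ℕ) : I ^ (k + n) ≤ J ^ k := by
  have hpow : I ^ (k + n) = J ^ k * I ^ n := by
    induction k with
    | zero => simp
    | succ k ih =>
      calc I ^ (k + 1 + n) = J ^ k * I ^ (n + 1) := by
            rw [show k + 1 + n = k + n + 1 by omega, pow_succ, ih]; ring
        _ = J ^ (k + 1) * I ^ n := by rw [hred]; ring
  exact hpow ▸ Ideal.mul_le_left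

/-- `toNat` is monotone only below `⊤`; the sandwich survives because once `a` reaches `⊤`
it stays there and drags `b` along. -/
lemma ENat.eventually_toNat_le_and_le_shift {a b : ℕ → ℕ∞} (ha : Monotone a) {n : ℕ}
    (hab : ∀ k, a k ≤ b k) (hba : ∀ k, b k ≤ a (k + n)) :
    ∀ᶠ k in atTop, (a k).toNat ≤ (b k).toNat ∧ (b k).toNat ≤ (a (k + n)).toNat := by
  by_cases hfin : ∀ k, a k ≠ ⊤
  · exact .of_forall fun k =>
      ⟨ENat.toNat_le_toNat (hab k) (ne_top_of_le_ne_top (hfin (k + n)) (hba k)),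
        ENat.toNat_le_toNat (hba k) (hfin (k + n))⟩
  · push Not at hfin
    obtain ⟨m, hm⟩ := hfin
    filter_upwards [eventually_ge_atTop m] with k hk
    have hak : a k = ⊤ := top_le_iff.mp (hm ▸ ha hk)
    have hbk : b k = ⊤ := top_le_iff.mp (hak ▸ hab k)
    simp [hak, hbk, top_le_iff.mp (hak ▸ ha (Nat.le_add_right k n))]

lemma tendsto_shift_div_pow {u : ℕ → ℝ} {e : ℝ} (n d : ℕ)
    (hu : Tendsto (fun k => u k / (k : ℝ) ^ d) atTop (𝓝 e)) :
    Tendsto (fun k => u (k + n) / (k : ℝ) ^ d) atTop (𝓝 e) := by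
  have hratio : Tendsto (fun k : ℕ => (1 + (n : ℝ) / k) ^ d) atTop (𝓝 1) := by
    simpa using ((tendsto_const_div_atTop_nhds_zero_nat (n : ℝ)).const_add 1).pow d
  have hlim := (hu.comp (tendsto_add_atTop_nat n)).mul hratio
  rw [mul_one] at hlim
  refine hlim.congr' ?_
  filter_upwards [eventually_ge_atTop 1] with k hk
  have hk0 : (k : ℝ) ≠ 0 := by positivity
  have hkn0 : ((k + n : ℕ) : ℝ) ≠ 0 := by positivity
  simp only [Function.comp_apply]
  push_cast at hkn0 ⊢
  field_simp
  rw [mul_assoc, div_pow, div_mul_cancel₀ _ (pow_ne_zero d hk0)]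

lemma tendsto_div_pow_of_le_of_le_shift {u v : ℕ → ℝ} {e : ℝ} {n d : ℕ}
    (hu : Tendsto (fun k => u k / (k : ℝ) ^ d) atTop (𝓝 e))
    (huv : ∀ᶠ k in atTop, u k ≤ v k) (hvu : ∀ᶠ k in atTop, v k ≤ u (k + n)) :
    Tendsto (fun k => v k / (k : ℝ) ^ d) atTop (𝓝 e) :=
  tendsto_of_tendsto_of_tendsto_of_le_of_le' hu (tendsto_shift_div_pow n d hu)
    (huv.mono fun k hk => by gcongr) (hvu.mono fun k hk => by gcongr)

lemma eventually_moduleLength_quotient_pow_le_and_le {R : Type*} [CommRing R] {I J : Ideal R}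
    {n : ℕ} (hJI : J ≤ I) (hred : I ^ (n + 1) = J * I ^ n) :
    ∀ᶠ k in atTop, moduleLength R (R ⧸ I ^ k) ≤ moduleLength R (R ⧸ J ^ k) ∧
      moduleLength R (R ⧸ J ^ k) ≤ moduleLength R (R ⧸ I ^ (k + n)) := by
  simp only [moduleLength_eq_toNat_length]
  exact ENat.eventually_toNat_le_and_le_shift
    (fun k m hkm => Module.length_quotient_le_of_le (Ideal.pow_le_pow_right hkm))
    (fun k => Module.length_quotient_le_of_le (Ideal.pow_right_mono hJI k))
    (fun k => Module.length_quotient_le_of_le (Ideal.pow_add_le_pow_of_reduction hred k))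

theorem reduction_multiplicity_eq_general (R : Type*) [CommRing R] (d : ℕ)
    (I J : Ideal R) (hJI : J ≤ I) (hred : ∃ n : ℕ, I ^ (n + 1) = J * I ^ n)
    (eJ eI : ℝ) (heJ : HasHSMultiplicity R J d eJ) (heI : HasHSMultiplicity R I d eI) :
    eJ = eI := by
  obtain ⟨n, hred⟩ := hred
  have hlengths := eventually_moduleLength_quotient_pow_le_and_le hJI hred
  refine tendsto_nhds_unique heJ (tendsto_div_pow_of_le_of_le_shift (n := n) heI ?_ ?_)
  · filter_upwards [hlengths] with k hk
    gcongr
    exact_mod_cast hk.1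
  · filter_upwards [hlengths] with k hk
    gcongr
    exact_mod_cast hk.2

/-- If `J ⊆ I` is a reduction of the `m`-primary ideal `I` in a Noetherian local
ring `R`, then the Hilbert–Samuel multiplicities coincide: `e(J,R) = e(I,R)`. -/
theorem reduction_multiplicity_eq (R : Type*) [CommRing R] [IsNoetherianRing R]
    [IsLocalRing R] (d : ℕ) (hd : ringKrullDim R = d)
    (I J : Ideal R) (hprim : I.radical = IsLocalRing.maximalIdeal R)
    (hJI : J ≤ I) (hred : ∃ n : ℕ, I ^ (n + 1) = J * I ^ n)
    (eJ eI : ℝ) (heJ : HasHSMultiplicity R J d eJ) (heI : HasHSMultiplicity R I d eI) :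
    eJ = eI :=
  reduction_multiplicity_eq_general R d I J hJI hred eJ eI heJ heI
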